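/- If a position p is locally closed in a g-term t, then p is locally closed in tσ for any substitution list σ of closed g-terms, and moreover ⟨tσ⟩p = (⟨t⟩p)σ. -/

import Mathlib

namespace HashAlpha

/-- g-terms: λ-terms with de Bruijn indices, extended with global variables `gvar t`. -/
inductive GTerm : Type
  | var : ℕ → GTerm
  | app : GTerm → GTerm → GTerm
  | lam : GTerm → GTerm
  | gvar : GTerm → GTerm
  deriving DecidableEq

/-- A g-term is a pure λ-term if it contains no global variables. -/
def GTerm.IsPure : GTerm → Prop
  | .var _ => True
  | .app a b => a.IsPure ∧ b.IsPure
  | .lam a => a.IsPure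
  | .gvar _ => False

/-- Directions for term positions: ↓, ↙, ↘. -/
inductive Dir : Type
  | down | left | right
  deriving DecidableEq

/-- A term position is a word over {↓, ↙, ↘}. -/
abbrev Pos := List Dir

/-- `|p|_λ`: the number of ↓'s in a position. -/
def lamDepth (p : Pos) : ℕ := p.count Dir.down

/-- Term indexing `t[p]` (partial; does not descend into global variables). -/
def GTerm.index : GTerm → Pos → Option GTerm
  | t, [] => some t
  | .app a _, .left :: p => a.index p
  | .app _ b, .right :: p => b.index p
  | .lam a, .down :: p => a.index p
  | _, _ => none

/-- `valid(t)`: the set of positions where `t[p]` is defined. -/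
def Valid (t : GTerm) : Set Pos := {p | (t.index p).isSome}

/-- `vars(t)`: positions of variables. -/
def Vars (t : GTerm) : Set Pos := {p | ∃ i, t.index p = some (.var i)}

/-- `free(t)`: positions of free variables. -/
def Free (t : GTerm) : Set Pos :=
  {p | ∃ i, t.index p = some (.var i) ∧ lamDepth p ≤ i}

/-- A term is closed if it has no free variables. -/
def Closed (t : GTerm) : Prop := Free t = ∅

/-- `p` is locally closed in `t`: every free variable of `t[p]` is also free in `t`. -/
def LocallyClosed (t : GTerm) (p : Pos) : Prop :=
  p ∈ Valid t ∧ ∀ u, t.index p = some u → ∀ q ∈ Free u, p ++ q ∈ Free t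

/-- Subtract `d0` from every free variable (`d` is the current binder depth). -/
def declift (d0 : ℕ) : GTerm → ℕ → GTerm
  | .var j, d => if d ≤ j then .var (j - d0) else .var j
  | .app a b, d => .app (declift d0 a d) (declift d0 b d)
  | .lam a, d => .lam (declift d0 a (d + 1))
  | .gvar a, _ => .gvar a

/-- The lift `⟨t⟩p`: equal to `t[p]` except every free variable of `t[p]` is
decremented by `|p|_λ`. -/
def liftAt (t : GTerm) (p : Pos) : Option GTerm :=
  (t.index p).map (fun u => declift (lamDepth p) u 0)

/-- Transition labels: ↓, ↙, ↘ and ↑. -/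
inductive Lab : Type
  | down | left | right | up
  deriving DecidableEq

def Lab.ofDir : Dir → Lab
  | .down => .down
  | .left => .left
  | .right => .right

/-- Transitions between term nodes. -/
inductive Trans : GTerm × Pos → Lab → GTerm × Pos → Prop
  | dir (t : GTerm) (p : Pos) (x : Dir) :
      (p ++ [x]) ∈ Valid t → Trans (t, p) (Lab.ofDir x) (t, p ++ [x])
  | up (t : GTerm) (q r : Pos) :
      t.index (q ++ Dir.down :: r) = some (.var (lamDepth r)) →
      Trans (t, q ++ Dir.down :: r) Lab.up (t, q)

/-- `R` is a bisimulation. -/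
def IsBisim (R : GTerm × Pos → GTerm × Pos → Prop) : Prop :=
  ∀ n₁ n₂, R n₁ n₂ → ∀ x : Lab,
    (∀ n₁', Trans n₁ x n₁' → ∃ n₂', Trans n₂ x n₂' ∧ R n₁' n₂') ∧
    (∀ n₂', Trans n₂ x n₂' → ∃ n₁', Trans n₁ x n₁' ∧ R n₁' n₂')

/-- Two nodes are bisimilar when some bisimulation relates them. -/
def Bisim (n₁ n₂ : GTerm × Pos) : Prop := ∃ R, IsBisim R ∧ R n₁ n₂

/-- `(t, p)` is a term node: `t` is closed and `p ∈ valid(t)`. -/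
def IsNode (t : GTerm) (p : Pos) : Prop := Closed t ∧ p ∈ Valid t

/-- A single fork between term nodes (let-abs rule or closed rule). -/
def SingleFork (n₁ n₂ : GTerm × Pos) : Prop :=
  (∃ t p q₁ q₂ r u,
      n₁ = (t, p ++ q₁ ++ r) ∧ n₂ = (t, p ++ q₂ ++ r) ∧
      IsNode t (p ++ q₁ ++ r) ∧ IsNode t (p ++ q₂ ++ r) ∧
      t.index p = some u ∧ LocallyClosed u q₁ ∧ liftAt u q₁ = liftAt u q₂) ∨
  (∃ t₁ t₂ p₁ p₂ r u,
      n₁ = (t₁, p₁ ++ r) ∧ n₂ = (t₂, p₂ ++ r) ∧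
      IsNode t₁ (p₁ ++ r) ∧ IsNode t₂ (p₂ ++ r) ∧
      t₁.index p₁ = some u ∧ Closed u ∧ t₂.index p₂ = some u)

/-- Fork equivalence: the transitive closure of single forks. -/
def ForkEquiv : GTerm × Pos → GTerm × Pos → Prop := Relation.TransGen SingleFork

/-- Shift free variables ≥ `c` up by `d`. -/
def shiftAux (c d : ℕ) : GTerm → GTerm
  | .var j => if j < c then .var j else .var (j + d)
  | .app a b => .app (shiftAux c d a) (shiftAux c d b)
  | .lam a => .lam (shiftAux (c + 1) d a)
  | .gvar a => .gvar a

/-- Capture-avoiding substitution of free variable `i` by `u` (at current depth `d`). -/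
def substAux (i : ℕ) (u : GTerm) : ℕ → GTerm → GTerm
  | d, .var j => if j = i + d then shiftAux 0 d u else .var j
  | d, .app a b => .app (substAux i u d a) (substAux i u d b)
  | d, .lam a => .lam (substAux i u (d + 1) a)
  | _, .gvar a => .gvar a

/-- `t[i := u]`: capture-avoiding substitution of variable `i` by `u` in `t`. -/
def subst (i : ℕ) (u : GTerm) (t : GTerm) : GTerm := substAux i u 0 t

/-- Simultaneous capture-avoiding substitution of variable `i` by `σᵢ`
(at current depth `d`). -/
def msubstAux (σ : List GTerm) : ℕ → GTerm → GTerm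
  | d, .var j =>
      if j < d then .var j else shiftAux 0 d (σ.getD (j - d) (.var (j - d)))
  | d, .app a b => .app (msubstAux σ d a) (msubstAux σ d b)
  | d, .lam a => .lam (msubstAux σ (d + 1) a)
  | _, .gvar a => .gvar a

/-- `tσ`: simultaneous substitution of each variable `i` by the `i`-th element of `σ`. -/
def msubst (σ : List GTerm) (t : GTerm) : GTerm := msubstAux σ 0 t

/-- Term size (the term summary `|t|`); global variables count as leaves. -/
def gsize : GTerm → ℕ
  | .var _ => 1
  | .gvar _ => 1
  | .app a b => gsize a + gsize b + 1
  | .lam a => gsize a + 1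

theorem gsize_shiftAux (c d : ℕ) (t : GTerm) : gsize (shiftAux c d t) = gsize t := by
  induction t generalizing c with
  | var j => simp only [shiftAux]; split <;> rfl
  | app a b iha ihb => simp [shiftAux, gsize, iha, ihb]
  | lam a ih => simp [shiftAux, gsize, ih]
  | gvar a => rfl

theorem gsize_substAux_gvar (i : ℕ) (w : GTerm) (d : ℕ) (t : GTerm) :
    gsize (substAux i (.gvar w) d t) = gsize t := by
  induction t generalizing d with
  | var j => simp only [substAux]; split <;> rfl
  | app a b iha ihb => simp [substAux, gsize, iha, ihb]
  | lam a ih => simp [substAux, gsize, ih]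
  | gvar a => rfl

theorem gsize_msubstAux (σ : List GTerm) (h : ∀ u ∈ σ, ∃ w, u = .gvar w)
    (d : ℕ) (t : GTerm) : gsize (msubstAux σ d t) = gsize t := by
  induction t generalizing d with
  | var j =>
    simp only [msubstAux]
    split
    · rfl
    · rw [gsize_shiftAux]
      rcases Nat.lt_or_ge (j - d) σ.length with hl | hl
      · rw [List.getD_eq_getElem _ _ hl]
        obtain ⟨w, hw⟩ := h _ (List.getElem_mem hl)
        rw [hw]; rfl
      · rw [List.getD_eq_default _ _ hl]; rfl
  | app a b iha ihb => simp [msubstAux, gsize, iha, ihb]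
  | lam a ih => simp [msubstAux, gsize, ih]
  | gvar a => rfl

theorem gsize_msubst (σ : List GTerm) (h : ∀ u ∈ σ, ∃ w, u = .gvar w)
    (t : GTerm) : gsize (msubst σ t) = gsize t :=
  gsize_msubstAux σ h 0 t

/-- The naive globalization procedure. -/
def globalizeNaive : GTerm → GTerm
  | .lam t => .lam (globalizeNaive (subst 0 (.gvar (.lam t)) t))
  | .app t u => .app (globalizeNaive t) (globalizeNaive u)
  | .gvar t => .gvar t
  | .var i => .var i
termination_by t => gsize t
decreasing_by
  · simp only [subst, gsize_substAux_gvar, gsize]; omega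
  · simp only [gsize]; omega
  · simp only [gsize]; omega

/-- The strongly connected component of a closed g-term: positions all of whose
nonempty prefixes index open terms. -/
def SCC (t : GTerm) : Set Pos :=
  {p | p ∈ Valid t ∧ ∀ p' u, p' ≠ [] → p' <+: p → t.index p' = some u → ¬ Closed u}

/-- `duplicates(t)`: strict subterms in the SCC of `t` whose term summary (size)
is not unique within the SCC. -/
def duplicates (t : GTerm) : Set GTerm :=
  {u | ∃ p q v, p ∈ SCC t ∧ q ∈ SCC t ∧ p ≠ [] ∧ q ≠ [] ∧ p ≠ q ∧
      t.index p = some u ∧ t.index q = some v ∧ gsize u = gsize v}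

open Classical in
mutual
/-- Efficient globalization. -/
noncomputable def globalize (r : GTerm) : GTerm :=
  globalizeScc r [] (by simp) r
termination_by (gsize r, 2)
decreasing_by
  apply Prod.Lex.right; omega

noncomputable def globalizeScc (r : GTerm) (σ : List GTerm)
    (h : ∀ u ∈ σ, ∃ w, u = GTerm.gvar w) : GTerm → GTerm
  | .lam t => .lam (globalizeStep r (.gvar (.app r t) :: σ)
      (by
        intro u hu
        rcases List.mem_cons.mp hu with h' | h'
        · exact ⟨_, h'⟩
        · exact h u h') t)
  | .app t u => .app (globalizeStep r σ h t) (globalizeStep r σ h u)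
  | .gvar t => .gvar t
  | .var i => msubst σ (.var i)
termination_by t => (gsize t, 1)
decreasing_by
  · apply Prod.Lex.left; simp only [gsize]; omega
  · apply Prod.Lex.left; simp only [gsize]; omega
  · apply Prod.Lex.left; simp only [gsize]; omega

noncomputable def globalizeStep (r : GTerm) (σ : List GTerm)
    (h : ∀ u ∈ σ, ∃ w, u = GTerm.gvar w) (t : GTerm) : GTerm :=
  if Closed t ∨ t ∈ duplicates r then globalize (msubst σ t)
  else globalizeScc r σ h t
termination_by (gsize t, 3)
decreasing_by
  · rw [gsize_msubst σ h]; apply Prod.Lex.right; omega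
  · apply Prod.Lex.right; omega
end

theorem aux_lamDepth_append (p q : Pos) : lamDepth (p ++ q) = lamDepth p + lamDepth q :=
  List.count_append

theorem aux_lamDepth_cons (x : Dir) (q : Pos) :
    lamDepth (x :: q) = lamDepth q + (if x = Dir.down then 1 else 0) := by
  simp [lamDepth, List.count_cons]

theorem aux_index_append (t : GTerm) (p q : Pos) :
    t.index (p ++ q) = (t.index p).bind (fun u => u.index q) := by
  induction p generalizing t with
  | nil => simp [GTerm.index]
  | cons x p ih => cases t <;> cases x <;> simp [GTerm.index, ih]

theorem aux_index_shiftAux (w : GTerm) (c d : ℕ) (q : Pos) :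
    (shiftAux c d w).index q = (w.index q).map (shiftAux (c + lamDepth q) d) := by
  induction w generalizing c q with
  | var j =>
    simp only [shiftAux]
    split <;> (cases q with
      | nil => simp [GTerm.index, lamDepth, shiftAux, *]
      | cons x q => cases x <;> simp [GTerm.index])
  | app a b iha ihb =>
    cases q with
    | nil => simp [GTerm.index, lamDepth, shiftAux]
    | cons x q =>
      cases x <;> simp [GTerm.index, shiftAux, iha, ihb, aux_lamDepth_cons]
  | lam a ih =>
    cases q with
    | nil => simp [GTerm.index, lamDepth, shiftAux]
    | cons x q =>
      cases x <;> simp [GTerm.index, shiftAux, ih, aux_lamDepth_cons]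
      ring_nf
  | gvar a =>
    cases q with
    | nil => simp [GTerm.index, lamDepth, shiftAux]
    | cons x q => cases x <;> simp [GTerm.index, shiftAux]

theorem aux_closed_shift_no_free (w : GTerm) (hw : Closed w) (c d : ℕ) (q : Pos) (j : ℕ)
    (h : (shiftAux c d w).index q = some (.var j)) : j < lamDepth q := by
  rw [aux_index_shiftAux] at h
  obtain ⟨v, hv, hv2⟩ := Option.map_eq_some_iff.mp h
  cases v with
  | var k =>
    have hk : k < lamDepth q := by
      by_contra hk
      have : q ∈ Free w := ⟨k, hv, by omega⟩
      rw [Closed] at hw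
      simp [hw] at this
    simp only [shiftAux] at hv2
    rw [if_pos (by omega)] at hv2
    injection hv2 with hv3
    omega
  | app a b => simp [shiftAux] at hv2
  | lam a => simp [shiftAux] at hv2
  | gvar a => simp [shiftAux] at hv2

theorem aux_index_msubstAux (σ : List GTerm) (t u : GTerm) (d : ℕ) (q : Pos)
    (h : t.index q = some u) :
    (msubstAux σ d t).index q = some (msubstAux σ (d + lamDepth q) u) := by
  induction t generalizing d q with
  | var j =>
    cases q with
    | nil =>
      simp only [GTerm.index, Option.some.injEq] at h
      subst h
      simp [GTerm.index, lamDepth]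
    | cons x q => exact absurd h (by cases x <;> simp [GTerm.index])
  | app a b iha ihb =>
    cases q with
    | nil =>
      simp only [GTerm.index, Option.some.injEq] at h
      subst h
      simp [GTerm.index, lamDepth, msubstAux]
    | cons x q =>
      cases x with
      | down => exact absurd h (by simp [GTerm.index])
      | left =>
        simp only [GTerm.index] at h
        rw [msubstAux]
        simp only [GTerm.index]
        rw [iha _ _ h, aux_lamDepth_cons]
        simp
      | right =>
        simp only [GTerm.index] at h
        rw [msubstAux]
        simp only [GTerm.index]
        rw [ihb _ _ h, aux_lamDepth_cons]
        simp
  | lam a ih =>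
    cases q with
    | nil =>
      simp only [GTerm.index, Option.some.injEq] at h
      subst h
      simp [GTerm.index, lamDepth, msubstAux]
    | cons x q =>
      cases x with
      | left => exact absurd h (by simp [GTerm.index])
      | right => exact absurd h (by simp [GTerm.index])
      | down =>
        simp only [GTerm.index] at h
        rw [msubstAux]
        simp only [GTerm.index]
        rw [ih _ _ h, aux_lamDepth_cons]
        congr 2
        simp
        omega
  | gvar a =>
    cases q with
    | nil =>
      simp only [GTerm.index, Option.some.injEq] at h
      subst h
      simp [GTerm.index, lamDepth, msubstAux]
    | cons x q => exact absurd h (by cases x <;> simp [GTerm.index])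

theorem aux_msubstAux_free (σ : List GTerm) (hσ : ∀ u ∈ σ, Closed u) (u : GTerm) :
    ∀ (d : ℕ) (q : Pos) (j : ℕ),
      (msubstAux σ d u).index q = some (.var j) → lamDepth q ≤ j →
      u.index q = some (.var j) ∧ (j < d + lamDepth q ∨ σ.length + d + lamDepth q ≤ j) := by
  induction u with
  | var i =>
    intro d q j h hle
    rw [msubstAux] at h
    split at h
    · cases q with
      | nil =>
        simp only [GTerm.index, Option.some.injEq] at h
        rw [h]
        refine ⟨rfl, Or.inl ?_⟩
        injection h.symm with h'
        simp [lamDepth]; omega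
      | cons x q => cases x <;> simp [GTerm.index] at h
    · rcases Nat.lt_or_ge (i - d) σ.length with hl | hl
      · exfalso
        have hcl : Closed (σ.getD (i - d) (.var (i - d))) := by
          rw [List.getD_eq_getElem _ _ hl]
          exact hσ _ (List.getElem_mem hl)
        have := aux_closed_shift_no_free _ hcl 0 d q j h
        omega
      · rw [List.getD_eq_default _ _ hl] at h
        simp only [shiftAux, List.getD] at h
        rw [if_neg (by omega)] at h
        have hid : i - d + d = i := by omega
        rw [hid] at h
        cases q with
        | nil =>
          simp only [GTerm.index, Option.some.injEq] at h
          injection h with h'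
          subst h'
          exact ⟨rfl, Or.inr (by simp [lamDepth]; omega)⟩
        | cons x q => cases x <;> simp [GTerm.index] at h
  | app a b iha ihb =>
    intro d q j h hle
    cases q with
    | nil => simp [GTerm.index, msubstAux] at h
    | cons x q =>
      cases x <;> rw [msubstAux] at h <;> simp only [GTerm.index] at h ⊢
      · exact absurd h (by simp [GTerm.index])
      · have := iha d q j h (by rw [aux_lamDepth_cons] at hle; omega)
        rw [aux_lamDepth_cons]
        simpa using this
      · have := ihb d q j h (by rw [aux_lamDepth_cons] at hle; omega)
        rw [aux_lamDepth_cons]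
        simpa using this
  | lam a ih =>
    intro d q j h hle
    cases q with
    | nil => simp [GTerm.index, msubstAux] at h
    | cons x q =>
      cases x <;> rw [msubstAux] at h <;> simp only [GTerm.index] at h ⊢
      · have := ih (d + 1) q j h (by rw [aux_lamDepth_cons] at hle; omega)
        rw [aux_lamDepth_cons]
        refine ⟨this.1, ?_⟩
        rcases this.2 with h' | h' <;> [left; right] <;> simp <;> omega
      · exact absurd h (by simp [GTerm.index])
      · exact absurd h (by simp [GTerm.index])
  | gvar a =>
    intro d q j h hle
    cases q with
    | nil => simp [GTerm.index, msubstAux] at h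
    | cons x q => cases x <;> simp [GTerm.index, msubstAux] at h

theorem aux_declift_shiftAux (D e : ℕ) (w : GTerm) :
    ∀ c, declift D (shiftAux c (D + e) w) (c + e) = shiftAux c e w := by
  induction w with
  | var j =>
    intro c
    simp only [shiftAux]
    split
    · rw [declift, if_neg (by omega)]
    · rw [declift, if_pos (by omega)]
      congr 1
      omega
  | app a b iha ihb => intro c; simp [shiftAux, declift, iha, ihb]
  | lam a ih =>
    intro c
    simp only [shiftAux, declift]
    congr 1
    have := ih (c + 1)
    convert this using 2
    omega
  | gvar a => intro c; simp [shiftAux, declift]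

theorem aux_declift_msubstAux (σ : List GTerm) (D : ℕ) (u : GTerm) :
    ∀ (d : ℕ),
      (∀ q j, u.index q = some (.var j) → d + lamDepth q ≤ j → D + d + lamDepth q ≤ j) →
      declift D (msubstAux σ (D + d) u) d = msubstAux σ d (declift D u d) := by
  induction u with
  | var j =>
    intro d hcond
    rcases Nat.lt_or_ge j d with hjd | hjd
    · have h1 : msubstAux σ (D + d) (.var j) = .var j := by
        rw [msubstAux]; rw [if_pos (by omega)]
      have h2 : declift D (.var j) d = .var j := by
        rw [declift]; rw [if_neg (by omega)]
      have h3 : msubstAux σ d (.var j) = .var j := by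
        rw [msubstAux]; rw [if_pos (by omega)]
      rw [h1, h2, h3]
    · have hDd : D + d ≤ j := by
        have := hcond [] j (by simp [GTerm.index]) (by simp [lamDepth]; omega)
        simp [lamDepth] at this
        omega
      have h1 : msubstAux σ (D + d) (.var j)
          = shiftAux 0 (D + d) (σ.getD (j - (D + d)) (.var (j - (D + d)))) := by
        rw [msubstAux]; rw [if_neg (by omega)]
      have h2 : declift D (.var j) d = .var (j - D) := by
        rw [declift]; rw [if_pos (by omega)]
      have h3 : msubstAux σ d (.var (j - D))
          = shiftAux 0 d (σ.getD (j - D - d) (.var (j - D - d))) := by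
        rw [msubstAux]; rw [if_neg (by omega)]
      rw [h1, h2, h3]
      have hk : j - D - d = j - (D + d) := by omega
      rw [hk]
      have := aux_declift_shiftAux D d (σ.getD (j - (D + d)) (.var (j - (D + d)))) 0
      simpa using this
  | app a b iha ihb =>
    intro d hcond
    have hca : ∀ q j, a.index q = some (.var j) → d + lamDepth q ≤ j →
        D + d + lamDepth q ≤ j := by
      intro q j h hle
      have := hcond (Dir.left :: q) j (by simpa [GTerm.index] using h)
        (by rw [aux_lamDepth_cons]; simpa using hle)
      rw [aux_lamDepth_cons] at this
      simpa using this
    have hcb : ∀ q j, b.index q = some (.var j) → d + lamDepth q ≤ j →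
        D + d + lamDepth q ≤ j := by
      intro q j h hle
      have := hcond (Dir.right :: q) j (by simpa [GTerm.index] using h)
        (by rw [aux_lamDepth_cons]; simpa using hle)
      rw [aux_lamDepth_cons] at this
      simpa using this
    simp only [msubstAux, declift, iha d hca, ihb d hcb]
  | lam a ih =>
    intro d hcond
    have hc : ∀ q j, a.index q = some (.var j) → (d + 1) + lamDepth q ≤ j →
        D + (d + 1) + lamDepth q ≤ j := by
      intro q j h hle
      have := hcond (Dir.down :: q) j (by simpa [GTerm.index] using h)
        (by rw [aux_lamDepth_cons]; simp; omega)
      rw [aux_lamDepth_cons] at this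
      simp at this
      omega
    have h1 := ih (d + 1) hc
    simp only [msubstAux, declift]
    rw [show D + d + 1 = D + (d + 1) by omega, h1]
  | gvar a => intro d hcond; simp only [msubstAux, declift]

theorem aux_msubstAux_var_big (σ : List GTerm) (L j : ℕ) (h : σ.length + L ≤ j) :
    msubstAux σ L (.var j) = .var j := by
  rw [msubstAux, if_neg (by omega), List.getD_eq_default _ _ (by omega)]
  simp only [shiftAux, List.getD]
  rw [if_neg (by omega)]
  congr 1
  omega

/-- local closedness is preserved by simultaneous substitution
with closed terms, and the lift commutes with the substitution. -/
theorem locallyClosed_msubst (t : GTerm) (p : Pos) (hlc : LocallyClosed t p)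
    (σ : List GTerm) (hσ : ∀ u ∈ σ, Closed u) :
    LocallyClosed (msubst σ t) p ∧
    liftAt (msubst σ t) p = (liftAt t p).map (msubst σ) := by
  obtain ⟨hval, hfree⟩ := hlc
  rw [Valid, Set.mem_setOf_eq, Option.isSome_iff_exists] at hval
  obtain ⟨u, hu⟩ := hval
  have hidx : (msubst σ t).index p = some (msubstAux σ (lamDepth p) u) := by
    have := aux_index_msubstAux σ t u 0 p hu
    rw [Nat.zero_add] at this
    exact this
  have hcond : ∀ q j, u.index q = some (.var j) → lamDepth q ≤ j →
      lamDepth p + lamDepth q ≤ j := by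
    intro q j hq hj
    obtain ⟨i, hi, hle⟩ := hfree u hu q ⟨j, hq, hj⟩
    rw [aux_index_append, hu] at hi
    simp only [Option.bind_some] at hi
    rw [hq] at hi
    injection hi with hi'
    injection hi' with hi''
    rw [aux_lamDepth_append] at hle
    omega
  constructor
  · refine ⟨?_, ?_⟩
    · rw [Valid, Set.mem_setOf_eq, hidx]; rfl
    · intro u' hu' q hq
      rw [hidx] at hu'
      injection hu' with hu'
      subst hu'
      obtain ⟨j, hqj, hjge⟩ := hq
      obtain ⟨hidxu, hcases⟩ := aux_msubstAux_free σ hσ u (lamDepth p) q j hqj hjge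
      have hbig : σ.length + lamDepth p + lamDepth q ≤ j := by
        rcases hcases with h | h
        · exact absurd (hcond q j hidxu hjge) (by omega)
        · omega
      refine ⟨j, ?_, ?_⟩
      · have htpq : t.index (p ++ q) = some (.var j) := by
          rw [aux_index_append, hu, Option.bind_some, hidxu]
        have h2 := aux_index_msubstAux σ t _ 0 (p ++ q) htpq
        rw [Nat.zero_add] at h2
        have h3 : msubstAux σ (lamDepth (p ++ q)) (GTerm.var j) = GTerm.var j := by
          apply aux_msubstAux_var_big
          rw [aux_lamDepth_append]
          omega
        rw [msubst]
        rw [h2, h3]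
      · rw [aux_lamDepth_append]; omega
  · rw [liftAt, liftAt, hidx, hu]
    simp only [Option.map_some]
    congr 1
    have := aux_declift_msubstAux σ (lamDepth p) u 0 (by
      intro q j hq hj
      have := hcond q j hq (by omega)
      omega)
    rw [Nat.add_zero] at this
    rw [msubst, this]

end HashAlpha
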